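/- arXiv:1901.08839 — 4 statements merged into one kernel-verified Lean document; each statement's English description precedes it below -/
import Mathlib

section
/- For any n ∈ ℕ, p ∈ (0,1] with pn ∈ ℤ, and k ≥ 1, the span of the functions AND_T : S(n,p) → ℝ over all T ⊆ [n] with |T| ≤ k equals the span of the functions Ψ_Q over all k'-tuples Q with k' ≤ k; that is, span_{|T| ≤ k}{AND_T} = span_{|Q| ≤ k}{Ψ_Q} as subspaces of the space of real-valued functions on S(n,p). -/
open Finset
open scoped Classical

/-- A point of the slice `S(n,p)`: a Boolean vector whose number of ones equals `p * n`. -/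
abbrev SlicePoint (n : ℕ) (p : ℝ) : Type :=
  {x : Fin n → Bool // ((Finset.univ.filter (fun i => x i = true)).card : ℝ) = p * n}

variable {n : ℕ} {p : ℝ}

/-- Expectation with respect to the uniform measure on the slice. -/
noncomputable def sExp (f : SlicePoint n p → ℝ) : ℝ :=
  (∑ x : SlicePoint n p, f x) / (Fintype.card (SlicePoint n p) : ℝ)

/-- The inner product `⟨f,g⟩ = E_x [f x * g x]` on functions on the slice. -/
noncomputable def sInner (f g : SlicePoint n p → ℝ) : ℝ :=
  sExp (fun x => f x * g x)

/-- `‖f‖₂² = E_x [f x ^ 2]`. -/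
noncomputable def sNormSq (f : SlicePoint n p → ℝ) : ℝ := sInner f f

/-- `‖f‖₂`. -/
noncomputable def sNorm (f : SlicePoint n p → ℝ) : ℝ := Real.sqrt (sNormSq f)

/-- The `i`-th coordinate of a slice point, viewed as a real number in `{0,1}`. -/
def coordR (x : SlicePoint n p) (i : Fin n) : ℝ := if x.1 i then 1 else 0

/-- `AND_T (x) = ∏_{i ∈ T} x_i`. -/
def andT (T : Finset (Fin n)) : SlicePoint n p → ℝ := fun x => ∏ i ∈ T, coordR x i

/-- The space `L_k` of functions of degree at most `k` on the slice. -/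
def degLE (n : ℕ) (p : ℝ) (k : ℕ) : Submodule ℝ (SlicePoint n p → ℝ) :=
  Submodule.span ℝ {g | ∃ T : Finset (Fin n), T.card ≤ k ∧ g = andT T}

/-- The space `L_{k-1}` (i.e. spanned by `AND_T` with `|T| < k`). -/
def degLT (n : ℕ) (p : ℝ) (k : ℕ) : Submodule ℝ (SlicePoint n p → ℝ) :=
  Submodule.span ℝ {g | ∃ T : Finset (Fin n), T.card < k ∧ g = andT T}

/-- `fk` is the orthogonal projection `f^{≤ k}` of `f` onto `L_k`. -/
def IsLowProj (n : ℕ) (p : ℝ) (k : ℕ) (f fk : SlicePoint n p → ℝ) : Prop :=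
  fk ∈ degLE n p k ∧ ∀ g ∈ degLE n p k, sInner (f - fk) g = 0

/-- `fk` is the orthogonal projection of `f` onto the span of `AND_T`, `|T| < k`. -/
def IsLowProjLT (n : ℕ) (p : ℝ) (k : ℕ) (f fk : SlicePoint n p → ℝ) : Prop :=
  fk ∈ degLT n p k ∧ ∀ g ∈ degLT n p k, sInner (f - fk) g = 0

/-- `Pr_x [f x ≠ g x]` under the uniform measure on the slice. -/
noncomputable def probNe (f g : SlicePoint n p → ℝ) : ℝ :=
  sExp (fun x => if f x = g x then 0 else 1)

/-- The action of a permutation on a slice point: `(x^π)_{π i} = x_i`. -/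
def permPt (π : Equiv.Perm (Fin n)) (x : SlicePoint n p) : SlicePoint n p :=
  ⟨fun i => x.1 (π.symm i), by
    have h : (Finset.univ.filter (fun i => x.1 (π.symm i) = true)) =
        (Finset.univ.filter (fun i => x.1 i = true)).map π.toEmbedding := by
      ext i
      simp [Finset.mem_map_equiv]
    rw [h, Finset.card_map]
    exact x.2⟩

/-- The derivative operator `D_{ij} f = (f - f^{(ij)})/2`. -/
noncomputable def Dij (i j : Fin n) (f : SlicePoint n p → ℝ) : SlicePoint n p → ℝ :=
  fun x => (f x - f (permPt (Equiv.swap i j) x)) / 2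

/-- The derivative operator `D_P` associated with a set `P` of pairs,
obtained by composing the `D_{ab}` for `(a,b) ∈ P` (these commute for tuples). -/
noncomputable def DP (P : Finset (Fin n × Fin n)) (f : SlicePoint n p → ℝ) :
    SlicePoint n p → ℝ :=
  P.toList.foldr (fun q g => Dij q.1 q.2 g) f

/-- `P` is a `k`-tuple: `k` pairs `(a,b)` with `a < b`, all `2k` entries distinct. -/
def IsTuple {n : ℕ} (k : ℕ) (P : Finset (Fin n × Fin n)) : Prop :=
  P.card = k ∧ (∀ q ∈ P, q.1 < q.2) ∧
    ∀ q ∈ P, ∀ r ∈ P, q ≠ r →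
      q.1 ≠ r.1 ∧ q.1 ≠ r.2 ∧ q.2 ≠ r.1 ∧ q.2 ≠ r.2

/-- `P` is shifted: for every pair `(a,b) ∈ P`, every `a' ≤ a` occurs as an entry of `P`. -/
def IsShifted {n : ℕ} (P : Finset (Fin n × Fin n)) : Prop :=
  ∀ q ∈ P, ∀ a : Fin n, a ≤ q.1 → ∃ r ∈ P, r.1 = a ∨ r.2 = a

/-- `P` is sorted: `a_i < a_j ↔ b_i < b_j`. -/
def IsSorted {n : ℕ} (P : Finset (Fin n × Fin n)) : Prop :=
  ∀ q ∈ P, ∀ r ∈ P, (q.1 < r.1 ↔ q.2 < r.2)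

/-- `Ψ_P (x) = ∏_{(a,b) ∈ P} (x_b - x_a)`. -/
def PsiP (P : Finset (Fin n × Fin n)) : SlicePoint n p → ℝ :=
  fun x => ∏ q ∈ P, (coordR x q.2 - coordR x q.1)

/-- The slice Laplacian `L f = f - (1 / C(n,2)) ∑_{i<j} f^{(ij)}`. -/
noncomputable def sliceLap (f : SlicePoint n p → ℝ) : SlicePoint n p → ℝ :=
  fun x => f x -
    (∑ q ∈ Finset.univ.filter (fun q : Fin n × Fin n => q.1 < q.2),
      f (permPt (Equiv.swap q.1 q.2) x)) / (n.choose 2 : ℝ)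

/-- The noise operator `H_t = exp (-t L) = ∑_l (-t)^l L^l / l!`. -/
noncomputable def Ht (t : ℝ) (f : SlicePoint n p → ℝ) : SlicePoint n p → ℝ :=
  fun x => ∑' l : ℕ, ((-t) ^ l / (l.factorial : ℝ)) * (sliceLap^[l] f) x

/-- The averaging operator `E_I f (x) = E_{Q ∼ S_I} [f (x^Q)]`, averaging over a uniformly
random permutation of the coordinates in `I` (fixing the coordinates outside `I`). -/
noncomputable def avgI (I : Finset (Fin n)) (f : SlicePoint n p → ℝ) : SlicePoint n p → ℝ :=
  fun x => (∑ σ : {σ : Equiv.Perm (Fin n) // ∀ i ∉ I, σ i = i}, f (permPt σ.1 x)) /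
    (Fintype.card {σ : Equiv.Perm (Fin n) // ∀ i ∉ I, σ i = i} : ℝ)

/-- The conditional variance `V_I (f) = ‖f - E_I f‖₂²`. -/
noncomputable def condVar (I : Finset (Fin n)) (f : SlicePoint n p → ℝ) : ℝ :=
  sNormSq (f - avgI I f)

/-- Expectation with respect to the uniform measure on the discrete cube. -/
noncomputable def cExp {n : ℕ} (f : (Fin n → Bool) → ℝ) : ℝ :=
  (∑ x : Fin n → Bool, f x) / (2 ^ n : ℝ)

/-- The Fourier–Walsh coefficient `f̂ (S) = E_x [f x * χ_S x]`. -/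
noncomputable def walshCoeff {n : ℕ} (f : (Fin n → Bool) → ℝ) (S : Finset (Fin n)) : ℝ :=
  cExp (fun x => f x * ∏ i ∈ S, (if x i then (-1 : ℝ) else 1))

/-- The Fourier weight of `f` beyond degree `k`: `W^{>k} (f) = ∑_{|S| > k} f̂(S)²`. -/
noncomputable def WAbove {n : ℕ} (k : ℕ) (f : (Fin n → Bool) → ℝ) : ℝ :=
  ∑ S ∈ Finset.univ.filter (fun S : Finset (Fin n) => k < S.card), walshCoeff f S ^ 2

/-- `Pr_x [f x ≠ g x]` under the uniform measure on the cube. -/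
noncomputable def cProbNe {n : ℕ} (f g : (Fin n → Bool) → ℝ) : ℝ :=
  cExp (fun x => if f x = g x then 0 else 1)

/-- The action of a permutation on a point of the cube: `(x^π)_{π i} = x_i`. -/
def cPerm {n : ℕ} (π : Equiv.Perm (Fin n)) (x : Fin n → Bool) : Fin n → Bool :=
  fun i => x (π.symm i)

/-- The derivative operator on the cube. -/
noncomputable def cDij {n : ℕ} (i j : Fin n) (f : (Fin n → Bool) → ℝ) :
    (Fin n → Bool) → ℝ :=
  fun x => (f x - f (cPerm (Equiv.swap i j) x)) / 2

/-!
Expanding each factor `x_b - x_a` shows that `Ψ_Q` has degree at most `|Q|`. Conversely one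
shows by induction on `|S|` that `x_S Ψ_P` lies in the span of the `Ψ_Q` whenever `P` is a tuple
whose entries avoid `S` and `|S| + |P| ≤ k`. Write `g = x_S Ψ_P` and let `D` be the set of
coordinates outside `S ∪ {c} ∪ entries(P)`. For `d ∈ D` the function `(x_c - x_d) g` is
`± x_S Ψ_{P ∪ {(c,d)}}`, in the span by induction. On the support of `g` exactly `|S| + |P|` of
the coordinates in `S ∪ entries(P)` equal one, and `∑ x_i = pn` on the slice, so
`∑_{d ∈ D} (x_c - x_d) g = (|D| + 1) x_c g + (|S| + |P| - pn) g`, which can be solved for `x_c g`.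
-/

def coord (i : Fin n) : SlicePoint n p → ℝ := fun x => coordR x i

def psiSpan (n : ℕ) (p : ℝ) (k : ℕ) : Submodule ℝ (SlicePoint n p → ℝ) :=
  Submodule.span ℝ
    {g : SlicePoint n p → ℝ | ∃ (k' : ℕ) (Q : Finset (Fin n × Fin n)),
      k' ≤ k ∧ IsTuple k' Q ∧ g = PsiP Q}

def pairEntries (P : Finset (Fin n × Fin n)) : Finset (Fin n) :=
  P.biUnion fun q => {q.1, q.2}

lemma coord_mul_self (i : Fin n) : (coord i * coord i : SlicePoint n p → ℝ) = coord i := by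
  funext x
  simp only [Pi.mul_apply, coord, coordR]
  split <;> norm_num

lemma sum_coord_mul (f : SlicePoint n p → ℝ) : ∑ i, coord i * f = (p * n) • f := by
  funext x
  simp only [Finset.sum_apply, Pi.mul_apply, Pi.smul_apply, smul_eq_mul, ← Finset.sum_mul,
    coord, coordR, Finset.sum_boole, x.2]

lemma andT_eq_prod (T : Finset (Fin n)) : (andT T : SlicePoint n p → ℝ) = ∏ i ∈ T, coord i := by
  funext x
  simp [andT, coord, Finset.prod_apply]

lemma psiP_eq_prod (P : Finset (Fin n × Fin n)) :
    (PsiP P : SlicePoint n p → ℝ) = ∏ q ∈ P, (coord q.2 - coord q.1) := by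
  funext x
  simp [PsiP, coord, Finset.prod_apply]

lemma andT_empty : (andT ∅ : SlicePoint n p → ℝ) = 1 := by
  simp [andT_eq_prod]

lemma psiP_empty : (PsiP ∅ : SlicePoint n p → ℝ) = 1 := by
  simp [psiP_eq_prod]

lemma coord_mul_andT_of_mem {i : Fin n} {T : Finset (Fin n)} (hi : i ∈ T) :
    (coord i * andT T : SlicePoint n p → ℝ) = andT T := by
  rw [andT_eq_prod, ← mul_prod_erase T _ hi, ← mul_assoc, coord_mul_self]

lemma coord_mul_andT (i : Fin n) (T : Finset (Fin n)) :
    (coord i * andT T : SlicePoint n p → ℝ) = andT (insert i T) := by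
  by_cases hi : i ∈ T
  · rw [insert_eq_of_mem hi, coord_mul_andT_of_mem hi]
  · rw [andT_eq_prod, andT_eq_prod, prod_insert hi]

lemma psiP_insert {q : Fin n × Fin n} {P : Finset (Fin n × Fin n)} (hq : q ∉ P) :
    (PsiP (insert q P) : SlicePoint n p → ℝ) = (coord q.2 - coord q.1) * PsiP P := by
  rw [psiP_eq_prod, psiP_eq_prod, prod_insert hq]

lemma coord_add_coord_mul_psiP {q : Fin n × Fin n} {P : Finset (Fin n × Fin n)} (hq : q ∈ P) :
    ((coord q.1 + coord q.2) * PsiP P : SlicePoint n p → ℝ) = PsiP P := by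
  rw [psiP_eq_prod, ← mul_prod_erase P _ hq, ← mul_assoc]
  congr 1
  linear_combination (coord_mul_self (p := p) q.2) - coord_mul_self q.1

lemma andT_mul_psiP_mem_degLE {k : ℕ} (S : Finset (Fin n)) (Q : Finset (Fin n × Fin n))
    (hk : #S + #Q ≤ k) : andT S * PsiP Q ∈ degLE n p k := by
  induction Q using Finset.induction_on generalizing S with
  | empty =>
    rw [psiP_empty, mul_one]
    exact Submodule.subset_span ⟨S, by simpa using hk, rfl⟩
  | insert q Q hq ih =>
    rw [card_insert_of_notMem hq] at hk
    have hexpand : (andT S * PsiP (insert q Q) : SlicePoint n p → ℝ) =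
        andT (insert q.2 S) * PsiP Q - andT (insert q.1 S) * PsiP Q := by
      rw [psiP_insert hq, ← coord_mul_andT, ← coord_mul_andT]
      ring
    rw [hexpand]
    exact sub_mem (ih _ (by grw [card_insert_le]; omega)) (ih _ (by grw [card_insert_le]; omega))

lemma psiSpan_le_degLE (n : ℕ) (p : ℝ) (k : ℕ) : psiSpan n p k ≤ degLE n p k := by
  refine Submodule.span_le.mpr ?_
  rintro _ ⟨k', Q, hk', hQ, rfl⟩
  simpa [andT_empty] using andT_mul_psiP_mem_degLE (p := p) ∅ Q (by simp [hQ.1, hk'])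

section Tuples

variable {m : ℕ} {P : Finset (Fin n × Fin n)}

lemma mem_pairEntries {a : Fin n} : a ∈ pairEntries P ↔ ∃ q ∈ P, a = q.1 ∨ a = q.2 := by
  simp [pairEntries]

lemma pairEntries_insert (q : Fin n × Fin n) :
    pairEntries (insert q P) = {q.1, q.2} ∪ pairEntries P :=
  biUnion_insert

lemma IsTuple.insert {a b : Fin n} (hP : IsTuple m P) (hab : a < b) (ha : a ∉ pairEntries P)
    (hb : b ∉ pairEntries P) : IsTuple (m + 1) (insert (a, b) P) := by
  have hnew : (a, b) ∉ P := fun h => ha (mem_pairEntries.2 ⟨_, h, Or.inl rfl⟩)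
  simp only [mem_pairEntries, not_exists, not_and, not_or] at ha hb
  refine ⟨by rw [card_insert_of_notMem hnew, hP.1], forall_mem_insert _ _ _ |>.2 ⟨hab, hP.2.1⟩, ?_⟩
  intro q hq r hr hqr
  rcases mem_insert.1 hq with rfl | hq <;> rcases mem_insert.1 hr with rfl | hr
  · exact absurd rfl hqr
  · exact ⟨(ha r hr).1, (ha r hr).2, (hb r hr).1, (hb r hr).2⟩
  · exact ⟨Ne.symm (ha q hq).1, Ne.symm (hb q hq).1, Ne.symm (ha q hq).2, Ne.symm (hb q hq).2⟩
  · exact hP.2.2 q hq r hr hqr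

lemma IsTuple.sum_pairEntries {M : Type*} [AddCommMonoid M] (hP : IsTuple m P) (f : Fin n → M) :
    ∑ d ∈ pairEntries P, f d = ∑ q ∈ P, (f q.1 + f q.2) := by
  rw [pairEntries, sum_biUnion]
  · exact sum_congr rfl fun q hq => sum_pair (hP.2.1 q hq).ne
  · intro q hq r hr hqr
    have := hP.2.2 q hq r hr hqr
    simp only [Function.onFun, disjoint_insert_left, disjoint_insert_right,
      disjoint_singleton_left, mem_insert, mem_singleton]
    tauto

end Tuples

section Reduction

variable {k m : ℕ} {S : Finset (Fin n)} {P : Finset (Fin n × Fin n)}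

lemma sum_coord_mul_andT_mul_psiP (hP : IsTuple m P) (hS : Disjoint S (pairEntries P)) :
    ∑ d ∈ S ∪ pairEntries P, coord d * (andT S * PsiP P) =
      (#S + m) • (andT S * PsiP P : SlicePoint n p → ℝ) := by
  have hS_part : ∀ d ∈ S, coord d * (andT S * PsiP P) = (andT S * PsiP P : SlicePoint n p → ℝ) :=
    fun d hd => by rw [← mul_assoc, coord_mul_andT_of_mem hd]
  have hP_part : ∀ q ∈ P, coord q.1 * (andT S * PsiP P) + coord q.2 * (andT S * PsiP P) =
      (andT S * PsiP P : SlicePoint n p → ℝ) :=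
    fun q hq => by rw [← add_mul, mul_left_comm, coord_add_coord_mul_psiP hq]
  rw [sum_union hS, hP.sum_pairEntries, sum_congr rfl hS_part, sum_congr rfl hP_part,
    sum_const, sum_const, hP.1, add_smul]

lemma sum_sub_coord_mul_andT_mul_psiP {c : Fin n} (hP : IsTuple m P)
    (hS : Disjoint S (pairEntries P)) (hc : c ∉ S ∪ pairEntries P) :
    ∑ d ∈ (insert c (S ∪ pairEntries P))ᶜ, (coord c - coord d) * (andT S * PsiP P) =
      ((#(insert c (S ∪ pairEntries P))ᶜ : ℝ) + 1) • (coord c * (andT S * PsiP P)) +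
        ((#S + m : ℝ) - p * n) • (andT S * PsiP P : SlicePoint n p → ℝ) := by
  have hsplit := sum_compl_add_sum (insert c (S ∪ pairEntries P))
    fun d => coord d * (andT S * PsiP P : SlicePoint n p → ℝ)
  rw [sum_coord_mul, sum_insert hc, sum_coord_mul_andT_mul_psiP hP hS] at hsplit
  simp only [sub_mul, sum_sub_distrib, sum_const]
  linear_combination (norm := module) -hsplit

lemma sub_coord_mul_andT_mul_psiP_mem
    (ih : ∀ m P, IsTuple m P → Disjoint S (pairEntries P) → #S + m ≤ k →
      andT S * PsiP P ∈ psiSpan n p k)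
    (hP : IsTuple m P) (hS : Disjoint S (pairEntries P)) (hk : #S + m < k) {a b : Fin n}
    (hab : a ≠ b) (ha : a ∉ S ∪ pairEntries P) (hb : b ∉ S ∪ pairEntries P) :
    (coord a - coord b) * (andT S * PsiP P) ∈ psiSpan n p k := by
  wlog hba : b < a generalizing a b
  · rw [← neg_sub, neg_mul]
    exact neg_mem (this hab.symm hb ha (lt_of_le_of_ne (not_lt.1 hba) hab))
  rw [notMem_union] at ha hb
  have hnew : (b, a) ∉ P := fun h => hb.2 (mem_pairEntries.2 ⟨_, h, Or.inl rfl⟩)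
  have hS' : Disjoint S (pairEntries (insert (b, a) P)) := by
    rw [pairEntries_insert, disjoint_union_right]
    exact ⟨by simp [hb.1, ha.1], hS⟩
  have := ih _ _ (hP.insert hba hb.2 ha.2) hS' (by omega)
  rwa [psiP_insert hnew, mul_left_comm] at this

lemma andT_mul_psiP_mem_psiSpan (S : Finset (Fin n)) :
    ∀ m P, IsTuple m P → Disjoint S (pairEntries P) → #S + m ≤ k →
      andT S * PsiP P ∈ psiSpan n p k := by
  induction S using Finset.induction_on with
  | empty =>
    intro m P hP _ hk
    rw [andT_empty, one_mul]
    exact Submodule.subset_span ⟨m, P, by simpa using hk, hP, rfl⟩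
  | insert c S hcS ih =>
    intro m P hP hdisj hk
    rw [card_insert_of_notMem hcS] at hk
    rw [disjoint_insert_left] at hdisj
    obtain ⟨hcP, hS⟩ := hdisj
    have hc : c ∉ S ∪ pairEntries P := by simp [hcS, hcP]
    set g : SlicePoint n p → ℝ := andT S * PsiP P
    set D := (insert c (S ∪ pairEntries P))ᶜ
    have hg : g ∈ psiSpan n p k := ih m P hP hS (by omega)
    have hterms : ∀ d ∈ D, (coord c - coord d) * g ∈ psiSpan n p k := by
      intro d hd
      rw [mem_compl, mem_insert, not_or] at hd
      exact sub_coord_mul_andT_mul_psiP_mem ih hP hS (by omega) (Ne.symm hd.1) hc hd.2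
    have hsolve : coord c * g =
        ((#D : ℝ) + 1)⁻¹ • (∑ d ∈ D, (coord c - coord d) * g - ((#S + m : ℝ) - p * n) • g) := by
      rw [sum_sub_coord_mul_andT_mul_psiP hP hS hc, add_sub_cancel_right,
        inv_smul_smul₀ (by positivity)]
    rw [← coord_mul_andT, mul_assoc, hsolve]
    exact Submodule.smul_mem _ _ (sub_mem (Submodule.sum_mem _ hterms) (Submodule.smul_mem _ _ hg))

end Reduction

lemma degLE_le_psiSpan (n : ℕ) (p : ℝ) (k : ℕ) : degLE n p k ≤ psiSpan n p k := by
  refine Submodule.span_le.mpr ?_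
  rintro _ ⟨T, hT, rfl⟩
  simpa [psiP_empty] using andT_mul_psiP_mem_psiSpan (p := p) T 0 ∅
    ⟨rfl, by simp, by simp⟩ (by simp [pairEntries]) (by simpa using hT)

theorem and_span_eq_psi_span_general (n : ℕ) (p : ℝ) (k : ℕ) :
    degLE n p k =
      Submodule.span ℝ
        {g : SlicePoint n p → ℝ | ∃ (k' : ℕ) (Q : Finset (Fin n × Fin n)),
          k' ≤ k ∧ IsTuple k' Q ∧ g = PsiP Q} :=
  le_antisymm (degLE_le_psiSpan n p k) (psiSpan_le_degLE n p k)

/-- The span of the functions `AND_T`, over `|T| ≤ k`, equals the span of the functions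
`Ψ_Q`, over all `k'`-tuples `Q` with `k' ≤ k`. -/
theorem and_span_eq_psi_span (n : ℕ) (p : ℝ) (hp : 0 < p) (hp1 : p ≤ 1)
    (hpn : ∃ m : ℤ, (m : ℝ) = p * n) (k : ℕ) (hk : 1 ≤ k) :
    degLE n p k =
      Submodule.span ℝ
        {g : SlicePoint n p → ℝ | ∃ (k' : ℕ) (Q : Finset (Fin n × Fin n)),
          k' ≤ k ∧ IsTuple k' Q ∧ g = PsiP Q} :=
  and_span_eq_psi_span_general n p k
end

section
/- Let P be a k-tuple over [n] and T ⊆ [n]. (1) If |T| < k, then D_P(AND_T) is identically 0 on S(n,p). (2) If |T| = k, then D_P(AND_T) is identically 0 unless every pair of P contains exactly one element of T, in which case D_P(AND_T) equals Ψ_P/2^k or −Ψ_P/2^k. -/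
open Finset
open scoped Classical

variable {n : ℕ} {p : ℝ}

/-! `D_{ab}` sees `AND_T = AND_{T ∩ {a,b}} · AND_{T \ {a,b}}` only through the first factor, the
second being invariant under the transposition `(a b)`; hence
`D_{ab} AND_T = ε (x_b - x_a) / 2 · AND_{T \ {a,b}}` with `ε = 𝟙[b ∈ T] - 𝟙[a ∈ T]`. Since the pairs
of a tuple are disjoint, iterating gives `D_P AND_T = (∏_q ε_q / 2) · Ψ_P · AND_{T \ ⋃P}`. The
scalar vanishes unless every pair splits `T`; if every pair does, `T` meets `⋃P` in exactly `k`
points, which forces `|T| ≥ k`, and `T ⊆ ⋃P` when `|T| = k`. -/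

lemma coordR_permPt_swap_of_notMem {a b i : Fin n} (hi : i ∉ ({a, b} : Finset (Fin n)))
    (x : SlicePoint n p) : coordR (permPt (Equiv.swap a b) x) i = coordR x i := by
  rw [mem_insert, mem_singleton, not_or] at hi
  simp [coordR, permPt, Equiv.swap_apply_of_ne_of_ne hi.1 hi.2]

lemma andT_permPt_swap_of_disjoint {a b : Fin n} {S : Finset (Fin n)}
    (hS : Disjoint S {a, b}) (x : SlicePoint n p) :
    andT S (permPt (Equiv.swap a b) x) = andT S x :=
  prod_congr rfl fun _ hi => coordR_permPt_swap_of_notMem (disjoint_left.mp hS hi) x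

lemma permPt_refl (x : SlicePoint n p) : permPt (Equiv.refl (Fin n)) x = x := rfl

lemma coordR_permPt_swap_left (a b : Fin n) (x : SlicePoint n p) :
    coordR (permPt (Equiv.swap a b) x) a = coordR x b := by
  simp [coordR, permPt]

lemma coordR_permPt_swap_right (a b : Fin n) (x : SlicePoint n p) :
    coordR (permPt (Equiv.swap a b) x) b = coordR x a := by
  simp [coordR, permPt]

def splitSign (T : Finset (Fin n)) (q : Fin n × Fin n) : ℝ :=
  (if q.2 ∈ T then 1 else 0) - (if q.1 ∈ T then 1 else 0)

lemma Dij_andT (a b : Fin n) (T : Finset (Fin n)) :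
    Dij a b (andT (p := p) T) =
      fun x => splitSign T (a, b) / 2 * (coordR x b - coordR x a) * andT (T \ {a, b}) x := by
  funext x
  have hrest := andT_permPt_swap_of_disjoint (sdiff_disjoint (t := T) (s := {a, b})) x
  have hsplit : ∀ y : SlicePoint n p, andT T y = andT (T ∩ {a, b}) y * andT (T \ {a, b}) y :=
    fun y => (prod_inter_mul_prod_sdiff T {a, b} _).symm
  rw [Dij, hsplit, hsplit, hrest]
  rcases eq_or_ne a b with rfl | hab
  · simp [splitSign, permPt_refl]
  by_cases ha : a ∈ T <;> by_cases hb : b ∈ T <;>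
    simp [splitSign, andT, ha, hb, inter_insert_of_mem, inter_insert_of_notMem,
      prod_pair hab, coordR_permPt_swap_left, coordR_permPt_swap_right] <;> ring

lemma Dij_mul_of_invariant {a b : Fin n} {g : SlicePoint n p → ℝ}
    (hg : ∀ x, g (permPt (Equiv.swap a b) x) = g x) (f : SlicePoint n p → ℝ) :
    Dij a b (g * f) = g * Dij a b f := by
  funext x
  simp only [Dij, Pi.mul_apply, hg]
  ring

lemma foldr_Dij_andT (L : List (Fin n × Fin n))
    (hL : L.Pairwise fun q r => Disjoint ({q.1, q.2} : Finset (Fin n)) {r.1, r.2})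
    (T : Finset (Fin n)) :
    L.foldr (fun q g => Dij q.1 q.2 g) (andT (p := p) T) =
      fun x => (L.map fun q => splitSign T q / 2 * (coordR x q.2 - coordR x q.1)).prod *
        andT (T \ pairEntries L.toFinset) x := by
  induction L with
  | nil => funext x; simp [pairEntries]
  | cons q L ih =>
    obtain ⟨hqL, hL⟩ := List.pairwise_cons.mp hL
    have hqE : Disjoint ({q.1, q.2} : Finset (Fin n)) (pairEntries L.toFinset) := by
      rw [pairEntries, disjoint_biUnion_right]
      simpa using hqL
    set F : SlicePoint n p → ℝ :=
      fun x => (L.map fun r => splitSign T r / 2 * (coordR x r.2 - coordR x r.1)).prod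
    have hF : ∀ x, F (permPt (Equiv.swap q.1 q.2) x) = F x := fun x => by
      refine congrArg List.prod (List.map_congr_left fun r hr => ?_)
      have hr := hqL r hr
      rw [coordR_permPt_swap_of_notMem (disjoint_right.mp hr (by simp)),
        coordR_permPt_swap_of_notMem (disjoint_right.mp hr (by simp))]
    calc Dij q.1 q.2 (L.foldr (fun q g => Dij q.1 q.2 g) (andT T))
        = Dij q.1 q.2 (F * andT (T \ pairEntries L.toFinset)) := by rw [ih hL]; rfl
      _ = F * Dij q.1 q.2 (andT (T \ pairEntries L.toFinset)) := Dij_mul_of_invariant hF _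
      _ = _ := by
        funext x
        have hsign : splitSign (T \ pairEntries L.toFinset) q = splitSign T q := by
          simp [splitSign, disjoint_left.mp hqE (mem_insert_self _ _),
            disjoint_left.mp hqE (mem_insert_of_mem (mem_singleton_self _))]
        have hrem : (T \ pairEntries L.toFinset) \ {q.1, q.2} =
            (T \ pairEntries (q :: L).toFinset) := by
          rw [List.toFinset_cons, pairEntries, pairEntries, biUnion_insert, sdiff_sdiff_left,
            union_comm]
          rfl
        rw [Pi.mul_apply, Dij_andT, hsign, hrem, List.map_cons, List.prod_cons]
        ring

lemma DP_andT_eq (P : Finset (Fin n × Fin n))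
    (hP : (P : Set (Fin n × Fin n)).PairwiseDisjoint fun q => ({q.1, q.2} : Finset (Fin n)))
    (T : Finset (Fin n)) :
    DP P (andT (p := p) T) =
      fun x => (∏ q ∈ P, splitSign T q / 2) * PsiP P x * andT (T \ pairEntries P) x := by
  have hL : P.toList.Pairwise fun q r => Disjoint ({q.1, q.2} : Finset (Fin n)) {r.1, r.2} :=
    P.nodup_toList.imp_of_mem fun hq hr hqr => hP (mem_toList.mp hq) (mem_toList.mp hr) hqr
  funext x
  rw [DP, foldr_Dij_andT _ hL]
  dsimp only
  rw [prod_map_toList, toList_toFinset, prod_mul_distrib]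
  rfl

lemma IsTuple.pairwiseDisjoint {k : ℕ} {P : Finset (Fin n × Fin n)} (hP : IsTuple k P) :
    (P : Set (Fin n × Fin n)).PairwiseDisjoint fun q => ({q.1, q.2} : Finset (Fin n)) := by
  intro q hq r hr hqr
  have := hP.2.2 q hq r hr hqr
  simp only [Function.onFun, disjoint_insert_left, disjoint_singleton_left, mem_insert,
    mem_singleton]
  tauto

section Splitting

variable {T : Finset (Fin n)} {q : Fin n × Fin n}

lemma splitSign_eq_zero (h : ¬ ((q.1 ∈ T ∧ q.2 ∉ T) ∨ (q.1 ∉ T ∧ q.2 ∈ T))) :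
    splitSign T q = 0 := by
  by_cases h1 : q.1 ∈ T <;> by_cases h2 : q.2 ∈ T <;> simp_all [splitSign]

lemma abs_splitSign (h : (q.1 ∈ T ∧ q.2 ∉ T) ∨ (q.1 ∉ T ∧ q.2 ∈ T)) :
    |splitSign T q| = 1 := by
  rcases h with ⟨h1, h2⟩ | ⟨h1, h2⟩ <;> simp [splitSign, h1, h2]

lemma card_inter_pair (h : (q.1 ∈ T ∧ q.2 ∉ T) ∨ (q.1 ∉ T ∧ q.2 ∈ T)) :
    #(T ∩ {q.1, q.2}) = 1 := by
  rcases h with ⟨h1, h2⟩ | ⟨h1, h2⟩ <;>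
    simp [inter_insert_of_mem, inter_insert_of_notMem, h1, h2]

end Splitting

section PairwiseDisjoint

variable {P : Finset (Fin n × Fin n)}
  (hP : (P : Set (Fin n × Fin n)).PairwiseDisjoint fun q => ({q.1, q.2} : Finset (Fin n)))
  {T : Finset (Fin n)}
include hP

lemma DP_andT_eq_zero {q : Fin n × Fin n} (hq : q ∈ P)
    (hbad : ¬ ((q.1 ∈ T ∧ q.2 ∉ T) ∨ (q.1 ∉ T ∧ q.2 ∈ T))) : DP P (andT (p := p) T) = 0 := by
  have hzero : ∏ q ∈ P, splitSign T q / 2 = 0 :=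
    prod_eq_zero hq (by rw [splitSign_eq_zero hbad, zero_div])
  rw [DP_andT_eq P hP, hzero]
  funext x
  rw [zero_mul, zero_mul, Pi.zero_apply]

lemma card_inter_pairEntries (hT : ∀ q ∈ P, (q.1 ∈ T ∧ q.2 ∉ T) ∨ (q.1 ∉ T ∧ q.2 ∈ T)) :
    #(T ∩ pairEntries P) = #P := by
  rw [pairEntries, inter_biUnion, card_biUnion (hP.mono fun _ => inter_subset_right),
    sum_congr rfl fun q hq => card_inter_pair (hT q hq), sum_const, smul_eq_mul, mul_one]

lemma sdiff_pairEntries_eq_empty (hT : ∀ q ∈ P, (q.1 ∈ T ∧ q.2 ∉ T) ∨ (q.1 ∉ T ∧ q.2 ∈ T))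
    (hcard : #T = #P) : T \ pairEntries P = ∅ := by
  rw [sdiff_eq_empty_iff_subset, ← inter_eq_left]
  exact eq_of_subset_of_card_le inter_subset_left (by rw [card_inter_pairEntries hP hT, hcard])

end PairwiseDisjoint

lemma prod_splitSign_eq_one_or {P : Finset (Fin n × Fin n)} {T : Finset (Fin n)}
    (hT : ∀ q ∈ P, (q.1 ∈ T ∧ q.2 ∉ T) ∨ (q.1 ∉ T ∧ q.2 ∈ T)) :
    ∏ q ∈ P, splitSign T q = 1 ∨ ∏ q ∈ P, splitSign T q = -1 := by
  rw [← abs_eq zero_le_one, abs_prod]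
  exact prod_eq_one fun q hq => abs_splitSign (hT q hq)

theorem DP_andT_general (n : ℕ) (p : ℝ) (k : ℕ)
    (P : Finset (Fin n × Fin n)) (hP : IsTuple k P) (T : Finset (Fin n)) :
    (T.card < k → DP P (andT (p := p) T) = 0) ∧
    (T.card = k →
      (¬ (∀ q ∈ P, (q.1 ∈ T ∧ q.2 ∉ T) ∨ (q.1 ∉ T ∧ q.2 ∈ T)) →
        DP P (andT (p := p) T) = 0) ∧
      ((∀ q ∈ P, (q.1 ∈ T ∧ q.2 ∉ T) ∨ (q.1 ∉ T ∧ q.2 ∈ T)) →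
        DP P (andT (p := p) T) = (fun x => PsiP P x / 2 ^ k) ∨
        DP P (andT (p := p) T) = (fun x => -(PsiP P x) / 2 ^ k))) := by
  have hdisj := hP.pairwiseDisjoint
  have hk : #P = k := hP.1
  have hvanish : ¬ (∀ q ∈ P, (q.1 ∈ T ∧ q.2 ∉ T) ∨ (q.1 ∉ T ∧ q.2 ∈ T)) →
      DP P (andT (p := p) T) = 0 := fun hT => by
    obtain ⟨q, hq, hbad⟩ := not_forall₂.mp hT
    exact DP_andT_eq_zero hdisj hq hbad
  refine ⟨fun hlt => hvanish fun hT => ?_, fun hcard => ⟨hvanish, fun hT => ?_⟩⟩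
  · have := card_inter_pairEntries hdisj hT
    have := card_le_card (inter_subset_left (s₁ := T) (s₂ := pairEntries P))
    omega
  · rw [DP_andT_eq P hdisj, sdiff_pairEntries_eq_empty hdisj hT (hcard.trans hk.symm),
      prod_div_distrib, prod_const, hk]
    simp only [andT, prod_empty, mul_one]
    rcases prod_splitSign_eq_one_or hT with h | h <;> rw [h]
    · left; funext x; ring
    · right; funext x; ring

/-- Let `P` be a `k`-tuple and `T ⊆ [n]`. (1) If `|T| < k` then `D_P (AND_T) ≡ 0`.
(2) If `|T| = k` then `D_P (AND_T) ≡ 0`, unless every pair of `P` contains exactly one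
element of `T`, in which case `D_P (AND_T) = ± Ψ_P / 2^k`. -/
theorem DP_andT (n : ℕ) (p : ℝ) (hp : 0 < p) (hp1 : p ≤ 1)
    (hpn : ∃ m : ℤ, (m : ℝ) = p * n) (k : ℕ)
    (P : Finset (Fin n × Fin n)) (hP : IsTuple k P) (T : Finset (Fin n)) :
    (T.card < k → DP P (andT (p := p) T) = 0) ∧
    (T.card = k →
      (¬ (∀ q ∈ P, (q.1 ∈ T ∧ q.2 ∉ T) ∨ (q.1 ∉ T ∧ q.2 ∈ T)) →
        DP P (andT (p := p) T) = 0) ∧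
      ((∀ q ∈ P, (q.1 ∈ T ∧ q.2 ∉ T) ∨ (q.1 ∉ T ∧ q.2 ∈ T)) →
        DP P (andT (p := p) T) = (fun x => PsiP P x / 2 ^ k) ∨
        DP P (andT (p := p) T) = (fun x => -(PsiP P x) / 2 ^ k))) :=
  DP_andT_general n p k P hP T
end

section
/- Let P be a k-tuple over [n] and f : S(n,p) → ℝ. Then: (1) D_P(f) = D_P(f^{≥k}), where f^{≥k} = f − f^{≤ k−1}; in particular D_P vanishes on the degree ≤ k−1 subspace L_{k−1}. (2) For every m ∈ ℕ, the operator D_P maps the degree ≤ m subspace L_m into itself; consequently (D_P f)^{>m} = (D_P(f^{>m}))^{>m}. -/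
open Finset
open scoped Classical

variable {n : ℕ} {p : ℝ}

section Aux

variable {n : ℕ} {p : ℝ}

/-- auxiliary: listD -/
noncomputable def listD (L : List (Fin n × Fin n)) (f : SlicePoint n p → ℝ) :
    SlicePoint n p → ℝ := L.foldr (fun q g => Dij q.1 q.2 g) f

lemma DP_eq_listD (P : Finset (Fin n × Fin n)) (f : SlicePoint n p → ℝ) :
    DP P f = listD P.toList f := rfl

lemma listD_cons (q : Fin n × Fin n) (L : List (Fin n × Fin n)) (f : SlicePoint n p → ℝ) :
    listD (q :: L) f = Dij q.1 q.2 (listD L f) := rfl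

lemma Dij_sub (a b : Fin n) (f g : SlicePoint n p → ℝ) :
    Dij a b (f - g) = Dij a b f - Dij a b g := by
  funext x; simp only [Dij, Pi.sub_apply]; ring

lemma Dij_add (a b : Fin n) (f g : SlicePoint n p → ℝ) :
    Dij a b (f + g) = Dij a b f + Dij a b g := by
  funext x; simp only [Dij, Pi.add_apply]; ring

lemma Dij_smul (a b : Fin n) (c : ℝ) (f : SlicePoint n p → ℝ) :
    Dij a b (c • f) = c • Dij a b f := by
  funext x; simp only [Dij, Pi.smul_apply, smul_eq_mul]; ring

lemma Dij_zero (a b : Fin n) : Dij a b (0 : SlicePoint n p → ℝ) = 0 := by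
  funext x; simp [Dij]

lemma listD_sub (L : List (Fin n × Fin n)) (f g : SlicePoint n p → ℝ) :
    listD L (f - g) = listD L f - listD L g := by
  induction L with
  | nil => rfl
  | cons q L ih => rw [listD_cons, listD_cons, listD_cons, ih, Dij_sub]

lemma listD_add (L : List (Fin n × Fin n)) (f g : SlicePoint n p → ℝ) :
    listD L (f + g) = listD L f + listD L g := by
  induction L with
  | nil => rfl
  | cons q L ih => rw [listD_cons, listD_cons, listD_cons, ih, Dij_add]

lemma listD_smul (L : List (Fin n × Fin n)) (c : ℝ) (f : SlicePoint n p → ℝ) :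
    listD L (c • f) = c • listD L f := by
  induction L with
  | nil => rfl
  | cons q L ih => rw [listD_cons, listD_cons, ih, Dij_smul]

lemma listD_zero (L : List (Fin n × Fin n)) :
    listD L (0 : SlicePoint n p → ℝ) = 0 := by
  induction L with
  | nil => rfl
  | cons q L ih => rw [listD_cons, ih, Dij_zero]

lemma DP_sub (P : Finset (Fin n × Fin n)) (f g : SlicePoint n p → ℝ) :
    DP P (f - g) = DP P f - DP P g := listD_sub _ _ _

/-- auxiliary: entries of a list of pairs -/
def entriesL (L : List (Fin n × Fin n)) : Finset (Fin n) :=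
  L.foldr (fun q s => insert q.1 (insert q.2 s)) ∅

lemma entriesL_cons (q : Fin n × Fin n) (L : List (Fin n × Fin n)) :
    entriesL (q :: L) = insert q.1 (insert q.2 (entriesL L)) := rfl

lemma mem_entriesL {L : List (Fin n × Fin n)} {a : Fin n} :
    a ∈ entriesL L ↔ ∃ q ∈ L, a = q.1 ∨ a = q.2 := by
  induction L with
  | nil => simp [entriesL]
  | cons q L ih =>
    rw [entriesL_cons]
    simp only [Finset.mem_insert, ih, List.mem_cons]
    constructor
    · rintro (h | h | ⟨r, hr, h⟩)
      · exact ⟨q, Or.inl rfl, Or.inl h⟩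
      · exact ⟨q, Or.inl rfl, Or.inr h⟩
      · exact ⟨r, Or.inr hr, h⟩
    · rintro ⟨r, (rfl | hr), h⟩
      · tauto
      · exact Or.inr (Or.inr ⟨r, hr, h⟩)

/-- auxiliary: a function depends only on the coordinates in `J`. -/
def DOn (J : Finset (Fin n)) (g : SlicePoint n p → ℝ) : Prop :=
  ∀ x y : SlicePoint n p, (∀ i ∈ J, x.1 i = y.1 i) → g x = g y

lemma DOn.mono {J J' : Finset (Fin n)} (h : J ⊆ J') {g : SlicePoint n p → ℝ}
    (hg : DOn J g) : DOn J' g :=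
  fun x y hxy => hg x y fun i hi => hxy i (h hi)

lemma andT_DOn (T : Finset (Fin n)) : DOn T (andT (n := n) (p := p) T) := by
  intro x y h
  unfold andT coordR
  exact Finset.prod_congr rfl fun i hi => by rw [h i hi]

lemma permPt_fst (π : Equiv.Perm (Fin n)) (x : SlicePoint n p) (i : Fin n) :
    (permPt π x).1 i = x.1 (π.symm i) := rfl

lemma DOn_Dij {J : Finset (Fin n)} {g : SlicePoint n p → ℝ} (hg : DOn J g) (a b : Fin n) :
    DOn (insert a (insert b J)) (Dij a b g) := by
  intro x y h
  have h1 : g x = g y := hg x y fun i hi => h i (by simp [hi])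
  have h2 : g (permPt (Equiv.swap a b) x) = g (permPt (Equiv.swap a b) y) := by
    apply hg
    intro i hi
    rw [permPt_fst, permPt_fst, Equiv.symm_swap]
    rcases eq_or_ne i a with rfl | hia
    · rw [Equiv.swap_apply_left]; exact h b (by simp)
    rcases eq_or_ne i b with rfl | hib
    · rw [Equiv.swap_apply_right]; exact h a (by simp)
    · rw [Equiv.swap_apply_of_ne_of_ne hia hib]; exact h i (by simp [hi])
  simp only [Dij, h1, h2]

lemma Dij_eq_zero_of_DOn {J : Finset (Fin n)} {g : SlicePoint n p → ℝ} (hg : DOn J g)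
    {a b : Fin n} (ha : a ∉ J) (hb : b ∉ J) : Dij a b g = 0 := by
  funext x
  have key : g (permPt (Equiv.swap a b) x) = g x := by
    apply hg
    intro i hi
    rw [permPt_fst, Equiv.symm_swap,
      Equiv.swap_apply_of_ne_of_ne (fun hh => ha (by rwa [hh] at hi))
        (fun hh => hb (by rwa [hh] at hi))]
  simp [Dij, key]

lemma listD_DOn {J : Finset (Fin n)} {g : SlicePoint n p → ℝ} (hg : DOn J g)
    (L : List (Fin n × Fin n)) : DOn (J ∪ entriesL L) (listD L g) := by
  induction L with
  | nil => exact hg.mono (Finset.subset_union_left)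
  | cons q L ih =>
    rw [listD_cons]
    refine (DOn_Dij ih q.1 q.2).mono ?_
    intro i hi
    rw [entriesL_cons]
    simp only [Finset.mem_insert, Finset.mem_union] at hi ⊢
    tauto

lemma listD_eq_zero {J : Finset (Fin n)} (L : List (Fin n × Fin n))
    (hdisj : L.Pairwise (fun q r : Fin n × Fin n =>
      q.1 ≠ r.1 ∧ q.1 ≠ r.2 ∧ q.2 ≠ r.1 ∧ q.2 ≠ r.2))
    {g : SlicePoint n p → ℝ} (hg : DOn J g)
    (hw : ∃ q ∈ L, q.1 ∉ J ∧ q.2 ∉ J) : listD L g = 0 := by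
  induction L with
  | nil => simp at hw
  | cons q L ih =>
    rcases hw with ⟨r, hr, hr1, hr2⟩
    rw [listD_cons]
    rcases List.mem_cons.1 hr with rfl | hrL
    · have hD := listD_DOn hg L
      have hdq := (List.pairwise_cons.1 hdisj).1
      have hnot : ∀ a : Fin n, a = r.1 ∨ a = r.2 → a ∉ entriesL L := by
        intro a haa hmem
        rcases mem_entriesL.1 hmem with ⟨s, hs, hss⟩
        have h4 := hdq s hs
        rcases haa with rfl | rfl <;> rcases hss with h | h
        · exact h4.1 h
        · exact h4.2.1 h
        · exact h4.2.2.1 h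
        · exact h4.2.2.2 h
      apply Dij_eq_zero_of_DOn hD
      · simp only [Finset.mem_union, not_or]
        exact ⟨hr1, hnot r.1 (Or.inl rfl)⟩
      · simp only [Finset.mem_union, not_or]
        exact ⟨hr2, hnot r.2 (Or.inr rfl)⟩
    · rw [ih (List.pairwise_cons.1 hdisj).2 ⟨r, hrL, hr1, hr2⟩, Dij_zero]

lemma tuple_pairwise {k : ℕ} {P : Finset (Fin n × Fin n)} (hP : IsTuple k P) :
    P.toList.Pairwise (fun q r : Fin n × Fin n =>
      q.1 ≠ r.1 ∧ q.1 ≠ r.2 ∧ q.2 ≠ r.1 ∧ q.2 ≠ r.2) := by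
  refine List.Pairwise.imp_of_mem ?_ P.nodup_toList
  intro q r hq hr hne
  exact hP.2.2 q (Finset.mem_toList.1 hq) r (Finset.mem_toList.1 hr) hne

lemma exists_free_pair {k : ℕ} {P : Finset (Fin n × Fin n)} (hP : IsTuple k P)
    {T : Finset (Fin n)} (hT : T.card < k) :
    ∃ q ∈ P, q.1 ∉ T ∧ q.2 ∉ T := by
  by_contra h
  push_neg at h
  have hmaps : ∀ q ∈ P, (if q.1 ∈ T then q.1 else q.2) ∈ T := by
    intro q hq
    split_ifs with h1
    · exact h1
    · exact h q hq h1
  have hinj : Set.InjOn (fun q : Fin n × Fin n => if q.1 ∈ T then q.1 else q.2) P := by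
    intro q hq r hr heq
    by_contra hne
    have h4 := hP.2.2 q hq r hr hne
    simp only at heq
    split_ifs at heq
    · exact h4.1 heq
    · exact h4.2.1 heq
    · exact h4.2.2.1 heq
    · exact h4.2.2.2 heq
  have hcard := Finset.card_le_card_of_injOn _ hmaps hinj
  rw [hP.1] at hcard
  omega

lemma DP_vanish_degLT {k : ℕ} {P : Finset (Fin n × Fin n)} (hP : IsTuple k P) :
    ∀ g ∈ degLT n p k, DP P g = 0 := by
  intro g hg
  induction hg using Submodule.span_induction with
  | mem g hg =>
    obtain ⟨T, hT, rfl⟩ := hg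
    rw [DP_eq_listD]
    obtain ⟨q, hq, h1, h2⟩ := exists_free_pair hP hT
    exact listD_eq_zero _ (tuple_pairwise hP) (andT_DOn T)
      ⟨q, Finset.mem_toList.2 hq, h1, h2⟩
  | zero => exact listD_zero _
  | add f g _ _ hf hg => rw [DP_eq_listD] at hf hg ⊢; rw [listD_add, hf, hg, add_zero]
  | smul c f _ hf => rw [DP_eq_listD] at hf ⊢; rw [listD_smul, hf, smul_zero]

lemma Dij_mem_degLE {m : ℕ} (a b : Fin n) {g : SlicePoint n p → ℝ}
    (hg : g ∈ degLE n p m) : Dij a b g ∈ degLE n p m := by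
  induction hg using Submodule.span_induction with
  | mem g hg =>
    obtain ⟨T, hT, rfl⟩ := hg
    have heq : Dij a b (andT T : SlicePoint n p → ℝ) =
        (1 / 2 : ℝ) • andT T - (1 / 2 : ℝ) • andT (T.image (Equiv.swap a b)) := by
      funext x
      have himg : (∏ i ∈ T.image (Equiv.swap a b), coordR x i)
          = ∏ i ∈ T, coordR (permPt (Equiv.swap a b) x) i := by
        rw [Finset.prod_image (fun i _ j _ hh => (Equiv.swap a b).injective hh)]
        refine Finset.prod_congr rfl fun i hi => ?_
        show coordR x (Equiv.swap a b i) = coordR x ((Equiv.swap a b).symm i)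
        rw [Equiv.symm_swap]
      simp only [Dij, Pi.sub_apply, Pi.smul_apply, smul_eq_mul, andT]
      rw [himg]
      ring
    rw [heq]
    refine Submodule.sub_mem _ (Submodule.smul_mem _ _ (Submodule.subset_span ⟨T, hT, rfl⟩))
      (Submodule.smul_mem _ _ (Submodule.subset_span
        ⟨T.image (Equiv.swap a b), le_trans Finset.card_image_le hT, rfl⟩))
  | zero => rw [Dij_zero]; exact Submodule.zero_mem _
  | add f g _ _ hf hg => rw [Dij_add]; exact Submodule.add_mem _ hf hg
  | smul c f _ hf => rw [Dij_smul]; exact Submodule.smul_mem _ _ hf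

lemma DP_mem_degLE {m : ℕ} (P : Finset (Fin n × Fin n)) {g : SlicePoint n p → ℝ}
    (hg : g ∈ degLE n p m) : DP P g ∈ degLE n p m := by
  rw [DP_eq_listD]
  induction P.toList with
  | nil => exact hg
  | cons q L ih => rw [listD_cons]; exact Dij_mem_degLE q.1 q.2 ih

lemma sInner_sub_left (f g h : SlicePoint n p → ℝ) :
    sInner (f - g) h = sInner f h - sInner g h := by
  unfold sInner sExp
  rw [← sub_div, ← Finset.sum_sub_distrib]
  congr 1
  exact Finset.sum_congr rfl fun x _ => by simp [sub_mul]

lemma lowProj_unique {m : ℕ} {F u v : SlicePoint n p → ℝ}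
    (hu : IsLowProj n p m F u) (hv : IsLowProj n p m F v) : u = v := by
  cases isEmpty_or_nonempty (SlicePoint n p) with
  | inl h => funext x; exact (h.false x).elim
  | inr h =>
    have hmem : u - v ∈ degLE n p m := Submodule.sub_mem _ hu.1 hv.1
    have key : sInner (u - v) (u - v) = 0 := by
      have h2 : sInner ((F - v) - (F - u)) (u - v) = 0 := by
        rw [sInner_sub_left, hv.2 _ hmem, hu.2 _ hmem, sub_zero]
      have heq : (F - v) - (F - u) = (u - v : SlicePoint n p → ℝ) := by abel
      rwa [heq] at h2
    unfold sInner sExp at key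
    have hc : (Fintype.card (SlicePoint n p) : ℝ) ≠ 0 := by
      exact_mod_cast Fintype.card_ne_zero
    rw [div_eq_zero_iff] at key
    have hsum : ∑ x : SlicePoint n p, (u - v) x * (u - v) x = 0 := key.resolve_right hc
    have hall := (Finset.sum_eq_zero_iff_of_nonneg
      (fun x _ => mul_self_nonneg ((u - v) x))).1 hsum
    funext x
    have := hall x (Finset.mem_univ x)
    have h0 : (u - v) x = 0 := by
      exact mul_self_eq_zero.1 this
    simpa [sub_eq_zero] using h0

end Aux

/-- Let `P` be a `k`-tuple and `f : S(n,p) → ℝ`. Then: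
(1) `D_P f = D_P (f^{≥ k})` where `f^{≥ k} = f - f^{≤ k-1}`; in particular `D_P` vanishes
on the degree `≤ k-1` subspace.
(2) For every `m`, `D_P` maps the degree `≤ m` subspace `L_m` into itself; consequently
`(D_P f)^{>m} = (D_P (f^{>m}))^{>m}`. -/
theorem DP_degree (n : ℕ) (p : ℝ) (hp : 0 < p) (hp1 : p ≤ 1)
    (hpn : ∃ m : ℤ, (m : ℝ) = p * n) (k : ℕ)
    (P : Finset (Fin n × Fin n)) (hP : IsTuple k P) (f : SlicePoint n p → ℝ) :
    ((∀ flow, IsLowProjLT n p k f flow → DP P f = DP P (f - flow)) ∧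
      (∀ g ∈ degLT n p k, DP P g = 0)) ∧
    (∀ m : ℕ,
      (∀ g ∈ degLE n p m, DP P g ∈ degLE n p m) ∧
      (∀ fm gm hm, IsLowProj n p m f fm → IsLowProj n p m (DP P f) gm →
        IsLowProj n p m (DP P (f - fm)) hm →
        DP P f - gm = DP P (f - fm) - hm)) := by
  have hvanish : ∀ g ∈ degLT n p k, DP P g = 0 := DP_vanish_degLT hP
  refine ⟨⟨?_, hvanish⟩, ?_⟩
  · intro flow hflow
    rw [DP_sub, hvanish flow hflow.1, sub_zero]
  · intro m
    refine ⟨fun g hg => DP_mem_degLE P hg, ?_⟩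
    intro fm gm hm hfm hgm hhm
    have hDPfm : DP P fm ∈ degLE n p m := DP_mem_degLE P hfm.1
    have hproj : IsLowProj n p m (DP P f) (hm + DP P fm) := by
      refine ⟨Submodule.add_mem _ hhm.1 hDPfm, ?_⟩
      intro g hg
      have heq : DP P f - (hm + DP P fm) = DP P (f - fm) - hm := by
        rw [DP_sub]; abel
      rw [heq]
      exact hhm.2 g hg
    rw [lowProj_unique hgm hproj, DP_sub]
    abel
end

section
/- There exists a universal constant C > 0 such that the following holds. Let n ∈ ℕ, let 0 < p ≤ 1/2 with pn ∈ ℤ, let k ∈ ℕ, and let f : S(n,p) → ℤ be a function of degree ≤ k. Then either f is identically 0, or Pr_x[f(x) ≠ 0] ≥ p^{Ck}, where x is uniform on S(n,p). -/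
open Finset
open scoped Classical

variable {n : ℕ} {p : ℝ}

/-!
Identify the slice with the `m`-subsets of `Fin n`, `m = p n`; a function of degree `≤ k` is then
a combination of the indicators `S ↦ [T ⊆ S]` with `|T| ≤ k`. If such an `f` is nonzero but not
constant on the `m`-subsets of `F`, some exchange `z ∪ {i} ↦ z ∪ {j}` changes its value, and
`z ↦ f (z ∪ {i}) - f (z ∪ {j})` is a nonzero function of degree `≤ k - 1` on the `(m - 1)`-subsets
of `F \ {i, j}` whose support injects into that of `f`. By induction on `k`, `f` is nonzero on at
least `C(|F| - 2d, m - d)` sets, `d = min k m`. Finally `C(n - 2d, m - d) ≥ p ^ (4d) C(n, m)`,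
because `C(n, m) m (m - 1) ⋯ (m - d + 1) ≤ (2n) ^ d C(n - 2d, m - d)` and
`m (m - 1) ⋯ (m - d + 1) ≥ (m / e) ^ d`.
-/

namespace Nat

theorem choose_sub_le_choose {N m d : ℕ} (hd : d ≤ m) (hm : m ≤ N) :
    (N - 2 * d).choose (m - d) ≤ N.choose m :=
  calc (N - 2 * d).choose (m - d) ≤ (N - d).choose (m - d) := choose_le_choose _ (by omega)
    _ = (N - d).choose (N - m) := choose_symm_of_eq_add (by omega)
    _ ≤ N.choose (N - m) := choose_le_choose _ (by omega)
    _ = N.choose m := choose_symm hm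

theorem succ_mul_choose_le {a b : ℕ} (h : 2 * b ≤ a) :
    (b + 1) * (a + 2).choose (b + 1) ≤ 2 * (a + 2) * a.choose b := by
  have hpascal : (a + 1).choose b ≤ 2 * a.choose b := by
    rcases b with _ | c
    · simp
    · rw [choose_succ_succ']
      have := choose_le_succ_of_lt_half_left (r := c) (n := a) (by omega)
      omega
  calc (b + 1) * (a + 2).choose (b + 1) = (a + 2) * (a + 1).choose b := by
        rw [add_one_mul_choose_eq (a + 1) b]; ring
    _ ≤ (a + 2) * (2 * a.choose b) := Nat.mul_le_mul_left _ hpascal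
    _ = 2 * (a + 2) * a.choose b := by ring

theorem choose_mul_descFactorial_le {N m : ℕ} (h : 2 * m ≤ N) (d : ℕ) :
    (N + 2 * d).choose (m + d) * (m + d).descFactorial d ≤
      (2 * (N + 2 * d)) ^ d * N.choose m := by
  induction d with
  | zero => simp
  | succ d ih =>
    have hstep := succ_mul_choose_le (a := N + 2 * d) (b := m + d) (by omega)
    rw [show N + 2 * (d + 1) = N + 2 * d + 2 by ring, show m + (d + 1) = m + d + 1 by ring,
      succ_descFactorial_succ]
    calc (N + 2 * d + 2).choose (m + d + 1) * ((m + d + 1) * (m + d).descFactorial d)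
        = (m + d + 1) * (N + 2 * d + 2).choose (m + d + 1) * (m + d).descFactorial d := by ring
      _ ≤ 2 * (N + 2 * d + 2) * (N + 2 * d).choose (m + d) * (m + d).descFactorial d :=
        Nat.mul_le_mul_right _ hstep
      _ ≤ 2 * (N + 2 * d + 2) * ((2 * (N + 2 * d)) ^ d * N.choose m) := by
        rw [mul_assoc]; exact Nat.mul_le_mul_left _ ih
      _ ≤ 2 * (N + 2 * d + 2) * ((2 * (N + 2 * d + 2)) ^ d * N.choose m) :=
        Nat.mul_le_mul_left _ (Nat.mul_le_mul_right _ (Nat.pow_le_pow_left (by omega) d))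
      _ = (2 * (N + 2 * d + 2)) ^ (d + 1) * N.choose m := by ring

theorem pow_le_pow_mul_choose {N r : ℕ} (h : r ≤ N) : N ^ r ≤ r ^ r * N.choose r := by
  induction r generalizing N with
  | zero => simp
  | succ r ih =>
    obtain ⟨M, rfl⟩ : ∃ M, N = M + 1 := ⟨N - 1, by omega⟩
    rcases Nat.eq_zero_or_pos r with rfl | hr
    · simp
    have hcross : ((M + 1) * r) ^ r ≤ ((r + 1) * M) ^ r := Nat.pow_le_pow_left (by nlinarith) r
    have key : r ^ r * (M + 1) ^ r ≤ r ^ r * ((r + 1) ^ r * M.choose r) :=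
      calc r ^ r * (M + 1) ^ r = ((M + 1) * r) ^ r := by rw [mul_pow, mul_comm]
        _ ≤ ((r + 1) * M) ^ r := hcross
        _ = (r + 1) ^ r * M ^ r := mul_pow _ _ _
        _ ≤ (r + 1) ^ r * (r ^ r * M.choose r) := Nat.mul_le_mul_left _ (ih (by omega))
        _ = r ^ r * ((r + 1) ^ r * M.choose r) := by ring
    have hcancel := Nat.le_of_mul_le_mul_left key (by positivity)
    calc (M + 1) ^ (r + 1) = (M + 1) * (M + 1) ^ r := by ring
      _ ≤ (M + 1) * ((r + 1) ^ r * M.choose r) := Nat.mul_le_mul_left _ hcancel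
      _ = (r + 1) ^ r * ((M + 1) * M.choose r) := by ring
      _ = (r + 1) ^ (r + 1) * (M + 1).choose (r + 1) := by
        rw [add_one_mul_choose_eq]; ring

end Nat

theorem div_exp_one_pow_le_descFactorial {m d : ℕ} (h : d ≤ m) :
    ((m : ℝ) / Real.exp 1) ^ d ≤ m.descFactorial d := by
  have hfact : (d : ℝ) ^ d ≤ Real.exp 1 ^ d * d.factorial := by
    have := Real.pow_div_factorial_le_exp (x := d) (by positivity) d
    rw [div_le_iff₀ (by positivity), ← Real.exp_one_pow] at this
    linarith
  have hchoose : ((m ^ d : ℕ) : ℝ) ≤ ((d ^ d * m.choose d : ℕ) : ℝ) := by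
    exact_mod_cast Nat.pow_le_pow_mul_choose h
  push_cast at hchoose
  rw [Nat.descFactorial_eq_factorial_mul_choose, div_pow, div_le_iff₀ (by positivity)]
  push_cast
  calc (m : ℝ) ^ d ≤ d ^ d * m.choose d := hchoose
    _ ≤ Real.exp 1 ^ d * d.factorial * m.choose d := by gcongr
    _ = d.factorial * m.choose d * Real.exp 1 ^ d := by ring

theorem two_mul_le_of_cast_eq_mul {N m : ℕ} {p : ℝ} (hp : p ≤ 1 / 2) (hm : (m : ℝ) = p * N) :
    2 * m ≤ N := by
  have : (2 * m : ℝ) ≤ N := by nlinarith [(Nat.cast_nonneg N : (0 : ℝ) ≤ N)]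
  exact_mod_cast this

theorem pow_mul_choose_le_choose_sub {N m d : ℕ} {p : ℝ} (hp0 : 0 < p) (hp : p ≤ 1 / 2)
    (hm : (m : ℝ) = p * N) (hd : d ≤ m) :
    p ^ (4 * d) * N.choose m ≤ (N - 2 * d).choose (m - d) := by
  rcases Nat.eq_zero_or_pos d with rfl | hd0
  · simp
  have h2m := two_mul_le_of_cast_eq_mul hp hm
  have hcount : ((N.choose m * m.descFactorial d : ℕ) : ℝ) ≤
      (((2 * N) ^ d * (N - 2 * d).choose (m - d) : ℕ) : ℝ) := by
    have := Nat.choose_mul_descFactorial_le (N := N - 2 * d) (m := m - d) (by omega) d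
    rw [show N - 2 * d + 2 * d = N by omega, show m - d + d = m by omega] at this
    exact_mod_cast this
  push_cast at hcount
  have hmpos : (0 : ℝ) < m := by exact_mod_cast (by omega : 0 < m)
  have hbase : p ^ 4 * (2 * N) ≤ m / Real.exp 1 := by
    rw [le_div_iff₀ (Real.exp_pos 1)]
    have hp3 : p ^ 3 ≤ 1 / 8 := by
      calc p ^ 3 ≤ (1 / 2) ^ 3 := pow_le_pow_left₀ hp0.le hp 3
        _ = 1 / 8 := by norm_num
    have he := Real.exp_one_lt_d9
    calc p ^ 4 * (2 * N) * Real.exp 1 = 2 * p ^ 3 * Real.exp 1 * (m : ℝ) := by rw [hm]; ring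
      _ ≤ 1 * (m : ℝ) := by gcongr; nlinarith [mul_le_mul_of_nonneg_right hp3 (Real.exp_pos 1).le]
      _ = m := one_mul _
  refine le_of_mul_le_mul_right ?_ (pow_pos (div_pos hmpos (Real.exp_pos 1)) d)
  calc p ^ (4 * d) * N.choose m * ((m : ℝ) / Real.exp 1) ^ d
      ≤ p ^ (4 * d) * (N.choose m * m.descFactorial d) := by
        rw [mul_assoc]; gcongr; exact div_exp_one_pow_le_descFactorial hd
    _ ≤ p ^ (4 * d) * ((2 * N) ^ d * (N - 2 * d).choose (m - d)) :=
        mul_le_mul_of_nonneg_left hcount (by positivity)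
    _ = (p ^ 4 * (2 * N)) ^ d * (N - 2 * d).choose (m - d) := by rw [mul_pow, pow_mul]; ring
    _ ≤ ((m : ℝ) / Real.exp 1) ^ d * (N - 2 * d).choose (m - d) :=
        mul_le_mul_of_nonneg_right (pow_le_pow_left₀ (by positivity) hbase d) (Nat.cast_nonneg _)
    _ = (N - 2 * d).choose (m - d) * ((m : ℝ) / Real.exp 1) ^ d := mul_comm _ _

section AndSpan

variable {α : Type*} [DecidableEq α]

def andFun (T S : Finset α) : ℝ := if T ⊆ S then 1 else 0

variable (α) in
def andSpan (k : ℕ) : Submodule ℝ (Finset α → ℝ) :=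
  Submodule.span ℝ {g | ∃ T : Finset α, T.card ≤ k ∧ g = andFun T}

theorem andFun_mem_andSpan {T : Finset α} {k : ℕ} (h : T.card ≤ k) : andFun T ∈ andSpan α k :=
  Submodule.subset_span ⟨T, h, rfl⟩

theorem andFun_insert (T z : Finset α) (i : α) :
    andFun T (insert i z) = andFun (T.erase i) z := by
  simp [andFun, subset_insert_iff]

theorem andFun_eq_zero {T z : Finset α} {i : α} (hT : i ∈ T) (hz : i ∉ z) : andFun T z = 0 :=
  if_neg fun h => hz (h hT)

theorem apply_eq_of_mem_andSpan_zero {f : Finset α → ℝ} (hf : f ∈ andSpan α 0) (S S' : Finset α) :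
    f S = f S' := by
  induction hf using Submodule.span_induction with
  | mem g hg =>
    obtain ⟨T, hT, rfl⟩ := hg
    rw [Finset.card_eq_zero.mp (Nat.le_zero.mp hT)]
    simp [andFun]
  | zero => rfl
  | add g₁ g₂ _ _ h₁ h₂ => simp only [Pi.add_apply, h₁, h₂]
  | smul c g _ h => simp only [Pi.smul_apply, h]

theorem exists_mem_andSpan_eq_insert_sub_insert {k : ℕ} {f : Finset α → ℝ}
    (hf : f ∈ andSpan α (k + 1)) {i j : α} (hij : i ≠ j) :
    ∃ a ∈ andSpan α k, ∀ z, i ∉ z → j ∉ z → f (insert i z) - f (insert j z) = a z := by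
  induction hf using Submodule.span_induction with
  | mem g hg =>
    obtain ⟨T, hT, rfl⟩ := hg
    by_cases hiT : i ∈ T <;> by_cases hjT : j ∈ T
    · refine ⟨0, zero_mem _, fun z hiz hjz => ?_⟩
      rw [andFun_insert T z i, andFun_insert T z j,
        andFun_eq_zero (mem_erase.mpr ⟨hij.symm, hjT⟩) hjz,
        andFun_eq_zero (mem_erase.mpr ⟨hij, hiT⟩) hiz, sub_zero, Pi.zero_apply]
    · refine ⟨andFun (T.erase i), andFun_mem_andSpan ?_, fun z hiz hjz => ?_⟩
      · rw [card_erase_of_mem hiT]; omega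
      · rw [andFun_insert T z i, andFun_insert T z j, erase_eq_of_notMem hjT,
          andFun_eq_zero hiT hiz, sub_zero]
    · refine ⟨-andFun (T.erase j), neg_mem (andFun_mem_andSpan ?_), fun z hiz hjz => ?_⟩
      · rw [card_erase_of_mem hjT]; omega
      · rw [andFun_insert T z i, andFun_insert T z j, erase_eq_of_notMem hiT,
          andFun_eq_zero hjT hjz, zero_sub, Pi.neg_apply]
    · refine ⟨0, zero_mem _, fun z hiz hjz => ?_⟩
      rw [andFun_insert T z i, andFun_insert T z j, erase_eq_of_notMem hiT, erase_eq_of_notMem hjT,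
        sub_self, Pi.zero_apply]
  | zero => exact ⟨0, zero_mem _, fun z _ _ => by simp⟩
  | add g₁ g₂ _ _ h₁ h₂ =>
    obtain ⟨a₁, ha₁, e₁⟩ := h₁
    obtain ⟨a₂, ha₂, e₂⟩ := h₂
    refine ⟨a₁ + a₂, add_mem ha₁ ha₂, fun z hiz hjz => ?_⟩
    simp only [Pi.add_apply, ← e₁ z hiz hjz, ← e₂ z hiz hjz]
    ring
  | smul c g _ h =>
    obtain ⟨a, ha, e⟩ := h
    refine ⟨c • a, Submodule.smul_mem _ c ha, fun z hiz hjz => ?_⟩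
    simp only [Pi.smul_apply, smul_eq_mul, ← e z hiz hjz]
    ring

theorem exists_insert_ne_insert {F : Finset α} {m : ℕ} {f : Finset α → ℝ} {S S' : Finset α}
    (hS : S ∈ F.powersetCard m) (hS' : S' ∈ F.powersetCard m) (hne : f S ≠ f S') :
    ∃ i ∈ F, ∃ j ∈ F, ∃ z ⊆ F, i ∉ z ∧ j ∉ z ∧ z.card + 1 = m ∧
      f (insert i z) ≠ f (insert j z) := by
  -- trade some `i ∈ S \ S'` for some `j ∈ S' \ S`: either `f` changes, or `#(S \ S')` drops
  induction hc : #(S \ S') using Nat.strong_induction_on generalizing S with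
  | _ c ih =>
    rw [mem_powersetCard] at hS hS'
    have hSS' : S ≠ S' := fun h => hne (h ▸ rfl)
    obtain ⟨i, hiS, hiS'⟩ : ∃ i ∈ S, i ∉ S' :=
      not_subset.mp fun h => hSS' (eq_of_subset_of_card_le h (by rw [hS.2, hS'.2]))
    obtain ⟨j, hjS', hjS⟩ : ∃ j ∈ S', j ∉ S :=
      not_subset.mp fun h => hSS' (eq_of_subset_of_card_le h (by rw [hS.2, hS'.2])).symm
    have hiz : i ∉ S.erase i := notMem_erase i S
    have hjz : j ∉ S.erase i := fun h => hjS (mem_of_mem_erase h)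
    have hzcard : (S.erase i).card + 1 = m := by
      have := card_pos.mpr ⟨i, hiS⟩
      rw [card_erase_of_mem hiS]; omega
    rcases ne_or_eq (f (insert i (S.erase i))) (f (insert j (S.erase i))) with hstep | hstep
    · exact ⟨i, hS.1 hiS, j, hS'.1 hjS', S.erase i, (erase_subset i S).trans hS.1, hiz, hjz,
        hzcard, hstep⟩
    rw [insert_erase hiS] at hstep
    refine ih #(insert j (S.erase i) \ S') ?_ ?_ (hstep ▸ hne) rfl
    · rw [← hc, insert_sdiff_of_mem _ hjS', erase_sdiff_comm]
      exact card_erase_lt_of_mem (mem_sdiff.mpr ⟨hiS, hiS'⟩)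
    · rw [mem_powersetCard]
      refine ⟨insert_subset (hS'.1 hjS') ((erase_subset i S).trans hS.1), ?_⟩
      rw [card_insert_of_notMem hjz, hzcard]

theorem card_filter_le_card_filter_insert {F : Finset α} {i j : α} (hi : i ∈ F) (hj : j ∈ F)
    (m : ℕ) {f a : Finset α → ℝ}
    (ha : ∀ z, i ∉ z → j ∉ z → f (insert i z) - f (insert j z) = a z) :
    #{z ∈ ((F.erase i).erase j).powersetCard m | a z ≠ 0} ≤
      #{S ∈ F.powersetCard (m + 1) | f S ≠ 0} := by
  have hfree : ∀ z ∈ ((F.erase i).erase j).powersetCard m, z ⊆ F ∧ i ∉ z ∧ j ∉ z ∧ z.card = m := by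
    intro z hz
    rw [mem_powersetCard] at hz
    refine ⟨hz.1.trans ((erase_subset _ _).trans (erase_subset _ _)), fun h => ?_, fun h => ?_,
      hz.2⟩
    · exact (mem_erase.mp (mem_erase.mp (hz.1 h)).2).1 rfl
    · exact (mem_erase.mp (hz.1 h)).1 rfl
  -- send `z` to whichever of `z ∪ {i}`, `z ∪ {j}` supports `f`; removing `{i, j}` recovers `z`
  let φ : Finset α → Finset α := fun z => if f (insert i z) ≠ 0 then insert i z else insert j z
  have hφ : ∀ z ∈ ((F.erase i).erase j).powersetCard m, φ z \ {i, j} = z := by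
    intro z hz
    obtain ⟨-, hiz, hjz, -⟩ := hfree z hz
    have hdisj : z \ {i, j} = z := sdiff_eq_self_of_disjoint (by simp [hiz, hjz])
    simp only [φ]
    split_ifs
    · rw [insert_sdiff_of_mem _ (by simp), hdisj]
    · rw [insert_sdiff_of_mem _ (by simp), hdisj]
  refine card_le_card_of_injOn φ (fun z hz => ?_) (fun z₁ hz₁ z₂ hz₂ h => ?_)
  · rw [mem_coe, mem_filter] at hz ⊢
    obtain ⟨hzF, hiz, hjz, hzm⟩ := hfree z hz.1
    have hins : ∀ u ∈ F, u ∉ z → insert u z ∈ F.powersetCard (m + 1) := fun u hu huz =>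
      mem_powersetCard.mpr ⟨insert_subset hu hzF, by rw [card_insert_of_notMem huz, hzm]⟩
    simp only [φ]
    split_ifs with hfi
    · exact ⟨hins i hi hiz, hfi⟩
    · refine ⟨hins j hj hjz, fun hfj => hz.2 ?_⟩
      rw [← ha z hiz hjz, not_not.mp hfi, hfj, sub_zero]
  · rw [mem_coe, mem_filter] at hz₁ hz₂
    rw [← hφ z₁ hz₁.1, h, hφ z₂ hz₂.1]

theorem choose_le_card_filter_ne_zero {k : ℕ} {F : Finset α} {m : ℕ}
    {f : Finset α → ℝ} (hf : f ∈ andSpan α k) (hm : 2 * m ≤ F.card)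
    (hne : ∃ S ∈ F.powersetCard m, f S ≠ 0) :
    (F.card - 2 * min k m).choose (m - min k m) ≤ #{S ∈ F.powersetCard m | f S ≠ 0} := by
  induction k generalizing F m f with
  | zero =>
    obtain ⟨S₁, -, hfS₁⟩ := hne
    have hall : ∀ S ∈ F.powersetCard m, f S ≠ 0 := fun S _ =>
      apply_eq_of_mem_andSpan_zero hf S S₁ ▸ hfS₁
    rw [filter_true_of_mem hall, card_powersetCard]
    simp
  | succ k ih =>
    obtain ⟨S₁, hS₁, hfS₁⟩ := hne
    by_cases hall : ∀ S ∈ F.powersetCard m, f S ≠ 0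
    · rw [filter_true_of_mem hall, card_powersetCard]
      exact Nat.choose_sub_le_choose (min_le_right _ _) (by omega)
    obtain ⟨S₀, hS₀, hfS₀⟩ : ∃ S ∈ F.powersetCard m, f S = 0 := by
      simpa only [not_forall, not_not, exists_prop] using hall
    obtain ⟨i, hi, j, hj, z, hzF, hiz, hjz, hzm, hfij⟩ :=
      exists_insert_ne_insert hS₀ hS₁ (hfS₀ ▸ hfS₁.symm)
    have hij : i ≠ j := by rintro rfl; exact hfij rfl
    obtain ⟨a, ha, hfa⟩ := exists_mem_andSpan_eq_insert_sub_insert hf hij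
    have hF' : ((F.erase i).erase j).card = F.card - 2 := by
      rw [card_erase_of_mem (mem_erase.mpr ⟨hij.symm, hj⟩), card_erase_of_mem hi]; rfl
    have hz : z ∈ ((F.erase i).erase j).powersetCard (m - 1) :=
      mem_powersetCard.mpr ⟨fun t ht => mem_erase.mpr ⟨fun h => hjz (h ▸ ht),
        mem_erase.mpr ⟨fun h => hiz (h ▸ ht), hzF ht⟩⟩, by omega⟩
    have haz : a z ≠ 0 := by rw [← hfa z hiz hjz]; exact sub_ne_zero.mpr hfij
    have hcount := ih ha (by omega) ⟨z, hz, haz⟩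
    have htransfer := card_filter_le_card_filter_insert hi hj (m - 1) hfa
    rw [show m - 1 + 1 = m by omega] at htransfer
    calc (F.card - 2 * min (k + 1) m).choose (m - min (k + 1) m)
        = (((F.erase i).erase j).card - 2 * min k (m - 1)).choose (m - 1 - min k (m - 1)) := by
          rw [hF']; congr 1 <;> omega
      _ ≤ _ := hcount
      _ ≤ _ := htransfer

end AndSpan

section Slice

def onesSet (x : SlicePoint n p) : Finset (Fin n) := univ.filter (fun i => x.1 i = true)

theorem andT_eq_andFun_onesSet (T : Finset (Fin n)) (x : SlicePoint n p) :
    andT T x = andFun T (onesSet x) := by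
  simp [andT, coordR, andFun, onesSet, prod_boole, subset_iff]

theorem exists_andSpan_of_mem_degLE {k : ℕ} {f : SlicePoint n p → ℝ} (hf : f ∈ degLE n p k) :
    ∃ g ∈ andSpan (Fin n) k, ∀ x, f x = g (onesSet x) := by
  let R : (Finset (Fin n) → ℝ) →ₗ[ℝ] (SlicePoint n p → ℝ) := LinearMap.funLeft ℝ ℝ onesSet
  have hle : degLE n p k ≤ (andSpan (Fin n) k).map R := by
    refine Submodule.span_le.mpr ?_
    rintro _ ⟨T, hT, rfl⟩
    exact ⟨andFun T, andFun_mem_andSpan hT, funext fun x => (andT_eq_andFun_onesSet T x).symm⟩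
  obtain ⟨g, hg, rfl⟩ := hle hf
  exact ⟨g, hg, fun _ => rfl⟩

def slicePointEquiv {m : ℕ} (hm : (m : ℝ) = p * n) :
    SlicePoint n p ≃ (univ : Finset (Fin n)).powersetCard m where
  toFun x := ⟨onesSet x, mem_powersetCard.mpr ⟨subset_univ _, by exact_mod_cast x.2.trans hm.symm⟩⟩
  invFun S := ⟨fun i => decide (i ∈ S.1), by
    have := (mem_powersetCard.mp S.2).2
    simp only [decide_eq_true_eq, filter_mem_eq_inter, univ_inter, this, hm]⟩
  left_inv x := by ext i; simp [onesSet]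
  right_inv S := by ext i; simp [onesSet]

theorem probNe_zero_eq {m : ℕ} (hm : (m : ℝ) = p * n) {f : SlicePoint n p → ℝ}
    {g : Finset (Fin n) → ℝ} (hfg : ∀ x, f x = g (onesSet x)) :
    probNe f (fun _ => 0) =
      #{S ∈ (univ : Finset (Fin n)).powersetCard m | g S ≠ 0} / n.choose m := by
  have hsum : ∑ x : SlicePoint n p, (if f x = 0 then (0 : ℝ) else 1) =
      ∑ S : (univ : Finset (Fin n)).powersetCard m, if g S = 0 then (0 : ℝ) else 1 := by
    simp only [hfg]
    exact (slicePointEquiv hm).sum_comp (fun S => if g S = 0 then (0 : ℝ) else 1)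
  rw [probNe, sExp, hsum,
    sum_coe_sort (powersetCard m univ) (fun S => if g S = 0 then (0 : ℝ) else 1),
    Fintype.card_congr (slicePointEquiv hm), Fintype.card_coe, card_powersetCard, card_univ,
    Fintype.card_fin]
  congr 1
  rw [← sum_boole]
  exact sum_congr rfl fun S _ => by by_cases h : g S = 0 <;> simp [h]

end Slice

/-- There is a universal constant `C > 0` such that: any integer-valued degree-`≤ k`
function on `S(n,p)` (with `0 < p ≤ 1/2`, `p n ∈ ℤ`) is either identically `0`, or
nonzero with probability at least `p^{C k}`. -/
theorem integer_to_boolean :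
    ∃ C : ℝ, 0 < C ∧
      ∀ (n : ℕ) (p : ℝ), 0 < p → p ≤ 1 / 2 → (∃ m : ℤ, (m : ℝ) = p * n) →
        ∀ (k : ℕ) (f : SlicePoint n p → ℝ),
          (∀ x, ∃ m : ℤ, f x = m) → f ∈ degLE n p k →
          (∀ x, f x = 0) ∨ probNe f (fun _ => 0) ≥ p ^ (C * k) := by
  refine ⟨4, by norm_num, fun n p hp0 hp hpn k f _ hf => ?_⟩
  obtain ⟨m, hm⟩ : ∃ m : ℕ, (m : ℝ) = p * n := by
    obtain ⟨z, hz⟩ := hpn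
    have hz0 : 0 ≤ z := by exact_mod_cast (hz ▸ by positivity : (0 : ℝ) ≤ z)
    exact ⟨z.toNat, by rw [← hz]; exact_mod_cast Int.toNat_of_nonneg hz0⟩
  have h2m := two_mul_le_of_cast_eq_mul hp hm
  obtain ⟨g, hg, hfg⟩ := exists_andSpan_of_mem_degLE hf
  refine or_iff_not_imp_left.mpr fun hf0 => ?_
  obtain ⟨x₀, hx₀⟩ := not_forall.mp hf0
  have hcount := choose_le_card_filter_ne_zero hg (by simpa using h2m)
    ⟨onesSet x₀, (slicePointEquiv hm x₀).2, hfg x₀ ▸ hx₀⟩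
  rw [card_univ, Fintype.card_fin] at hcount
  rw [probNe_zero_eq hm hfg, ge_iff_le, le_div_iff₀ (by exact_mod_cast Nat.choose_pos (by omega)),
    show (4 : ℝ) * k = (4 * k : ℕ) by push_cast; ring, Real.rpow_natCast]
  calc p ^ (4 * k) * n.choose m ≤ p ^ (4 * min k m) * n.choose m :=
        mul_le_mul_of_nonneg_right (pow_le_pow_of_le_one hp0.le (by linarith) (by omega))
          (Nat.cast_nonneg _)
    _ ≤ (n - 2 * min k m).choose (m - min k m) :=
        pow_mul_choose_le_choose_sub hp0 hp hm (min_le_right k m)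
    _ ≤ _ := by exact_mod_cast hcount
end
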